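/- arXiv:hep-th/9910089 — 3 statements merged into one kernel-verified Lean document; each statement's English description precedes it below -/
import Mathlib

section
/- The improper integral ∫_1^∞ (y²/√(y⁴ − 1) − 1) dy converges, and moreover ∫_1^∞ (y²(y⁴−1)^{−1/2} − 1) dy − 1 < 0. (The integrand behaves like (1/2)y^{−2} as y → ∞ and like (1/2)(y−1)^{−1/2} as y → 1⁺.) -/
open Real MeasureTheory

private lemma ads_pos4 {y : ℝ} (hy : 1 < y) : 0 < y ^ 4 - 1 := by
  have h2 : 1 < y ^ 2 := by nlinarith
  nlinarith [h2]

private lemma ads_key {y : ℝ} (hy : 1 < y) :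
    y ^ 2 / Real.sqrt (y ^ 4 - 1) - 1
      = 1 / (Real.sqrt (y ^ 4 - 1) * (y ^ 2 + Real.sqrt (y ^ 4 - 1))) := by
  have h4 : 0 < y ^ 4 - 1 := ads_pos4 hy
  set s := Real.sqrt (y ^ 4 - 1) with hs
  have hsp : 0 < s := Real.sqrt_pos.mpr h4
  have hs2 : s ^ 2 = y ^ 4 - 1 := Real.sq_sqrt h4.le
  have hden : 0 < y ^ 2 + s := by positivity
  field_simp
  nlinarith [hs2, hsp]

private lemma ads_nonneg {y : ℝ} (hy : 1 < y) :
    0 ≤ y ^ 2 / Real.sqrt (y ^ 4 - 1) - 1 := by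
  rw [ads_key hy]
  positivity

private lemma ads_bound1 {y : ℝ} (hy : 1 < y) :
    y ^ 2 / Real.sqrt (y ^ 4 - 1) - 1 ≤ (1/2) * (y - 1) ^ (-(1/2) : ℝ) := by
  have h4 : 0 < y ^ 4 - 1 := ads_pos4 hy
  have ht1 : 0 < y - 1 := by linarith
  set s := Real.sqrt (y ^ 4 - 1) with hsdef
  set t := Real.sqrt (y - 1) with htdef
  have hsp : 0 < s := Real.sqrt_pos.mpr h4
  have hs2 : s ^ 2 = y ^ 4 - 1 := Real.sq_sqrt h4.le
  have htp : 0 < t := Real.sqrt_pos.mpr ht1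
  have ht2 : t ^ 2 = y - 1 := Real.sq_sqrt ht1.le
  have hrw : (y - 1) ^ (-(1/2) : ℝ) = t⁻¹ := by
    rw [Real.rpow_neg ht1.le, htdef, Real.sqrt_eq_rpow]
  rw [ads_key hy, hrw]
  have hkey : 4 * t ^ 2 ≤ s ^ 2 := by
    rw [hs2, ht2]
    nlinarith [mul_nonneg (sq_nonneg (y - 1)) (show (0:ℝ) ≤ y ^ 2 + 2 * y + 3 by nlinarith [sq_nonneg (y + 1)])]
  have hst : 0 < s + 2 * t := by positivity
  have h1 : 2 * t ≤ s := by nlinarith [hkey, hst]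
  have h2 : 2 * t ≤ s * (y ^ 2 + s) := by
    nlinarith [h1, hsp.le, mul_nonneg hsp.le (show (0:ℝ) ≤ y ^ 2 - 1 + s by nlinarith)]
  have := one_div_le_one_div_of_le (by linarith : (0:ℝ) < 2 * t) h2
  calc 1 / (s * (y ^ 2 + s)) ≤ 1 / (2 * t) := this
    _ = (1/2) * t⁻¹ := by rw [one_div, mul_inv]; ring

private lemma ads_bound2 {y : ℝ} (hy : 3/2 ≤ y) :
    y ^ 2 / Real.sqrt (y ^ 4 - 1) - 1 ≤ 2 * y ^ (-4 : ℝ) := by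
  have hy1 : 1 < y := by linarith
  have h4 : 0 < y ^ 4 - 1 := ads_pos4 hy1
  set s := Real.sqrt (y ^ 4 - 1) with hsdef
  have hsp : 0 < s := Real.sqrt_pos.mpr h4
  have hs2 : s ^ 2 = y ^ 4 - 1 := Real.sq_sqrt h4.le
  have hy0 : 0 < y := by linarith
  have hrw : y ^ (-4 : ℝ) = (y ^ 4)⁻¹ := by
    rw [show (-4 : ℝ) = -((4:ℕ):ℝ) by norm_num, Real.rpow_neg hy0.le, Real.rpow_natCast]
  rw [ads_key hy1, hrw]
  have hy2 : 9/4 ≤ y ^ 2 := by nlinarith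
  have hy4 : 81/16 ≤ y ^ 4 := by nlinarith [hy2]
  have hkey : (y ^ 2 / 2) ^ 2 ≤ s ^ 2 := by rw [hs2]; nlinarith [hy4]
  have hs_lb : y ^ 2 / 2 ≤ s := by
    nlinarith [hkey, hsp.le, show (0:ℝ) < s + y ^ 2 / 2 by positivity]
  have heq : 2 * (y ^ 4)⁻¹ = 1 / (y ^ 4 / 2) := by
    rw [one_div, inv_div, div_eq_mul_inv]
  rw [heq]
  refine one_div_le_one_div_of_le (by positivity) ?_
  nlinarith [mul_nonneg (show (0:ℝ) ≤ s - y ^ 2 / 2 by linarith) (sq_nonneg y), hsp.le, sq_nonneg s]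

private lemma ads_meas : Measurable (fun y : ℝ => y ^ 2 / Real.sqrt (y ^ 4 - 1) - 1) := by
  refine Measurable.sub ?_ measurable_const
  exact (measurable_id.pow_const 2).div
    (Real.continuous_sqrt.measurable.comp ((measurable_id.pow_const 4).sub measurable_const))

private lemma ads_int1 :
    IntegrableOn (fun y : ℝ => (1/2) * (y - 1) ^ (-(1/2) : ℝ)) (Set.Ioc (1:ℝ) (3/2)) := by
  have h := (intervalIntegral.intervalIntegrable_rpow' (show (-1:ℝ) < -(1/2) by norm_num)
      (a := 0) (b := 1/2)).comp_sub_right 1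
  norm_num at h
  have h2 := (intervalIntegrable_iff_integrableOn_Ioc_of_le (by norm_num : (1:ℝ) ≤ 3/2)).mp h
  exact h2.const_mul _

private lemma ads_int2 :
    IntegrableOn (fun y : ℝ => 2 * y ^ (-4 : ℝ)) (Set.Ioi (3/2 : ℝ)) :=
  (integrableOn_Ioi_rpow_of_lt (by norm_num) (by norm_num : (0:ℝ) < 3/2)).const_mul _

private lemma ads_f_int1 :
    IntegrableOn (fun y : ℝ => y ^ 2 / Real.sqrt (y ^ 4 - 1) - 1) (Set.Ioc (1:ℝ) (3/2)) := by
  refine Integrable.mono' ads_int1 ads_meas.aestronglyMeasurable ?_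
  filter_upwards [ae_restrict_mem measurableSet_Ioc] with y hy
  rw [Real.norm_eq_abs, abs_of_nonneg (ads_nonneg hy.1)]
  exact ads_bound1 hy.1

private lemma ads_f_int2 :
    IntegrableOn (fun y : ℝ => y ^ 2 / Real.sqrt (y ^ 4 - 1) - 1) (Set.Ioi (3/2 : ℝ)) := by
  refine Integrable.mono' ads_int2 ads_meas.aestronglyMeasurable ?_
  filter_upwards [ae_restrict_mem measurableSet_Ioi] with y hy
  have hy1 : 1 < y := by simp only [Set.mem_Ioi] at hy; linarith
  rw [Real.norm_eq_abs, abs_of_nonneg (ads_nonneg hy1)]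
  exact ads_bound2 (le_of_lt hy)

private lemma ads_val1 :
    ∫ y in Set.Ioc (1:ℝ) (3/2), (1/2) * (y - 1) ^ (-(1/2) : ℝ) ≤ 71/100 := by
  have hle : (1:ℝ) ≤ 3/2 := by norm_num
  have heq : ∫ y in Set.Ioc (1:ℝ) (3/2), (1/2) * (y - 1) ^ (-(1/2) : ℝ)
      = ∫ y in (1:ℝ)..(3/2), (1/2) * (y - 1) ^ (-(1/2) : ℝ) :=
    (intervalIntegral.integral_of_le hle).symm
  rw [heq, intervalIntegral.integral_const_mul,
    intervalIntegral.integral_comp_sub_right (fun x => x ^ (-(1/2) : ℝ)) 1,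
    show (1:ℝ) - 1 = 0 by norm_num, show (3:ℝ)/2 - 1 = 1/2 by norm_num,
    _root_.integral_rpow (Or.inl (by norm_num)),
    show (-(1/2) : ℝ) + 1 = 1/2 by norm_num,
    Real.zero_rpow (by norm_num)]
  have hs : ((1:ℝ)/2) ^ ((1:ℝ)/2) = Real.sqrt (1/2) := (Real.sqrt_eq_rpow _).symm
  have h1 : Real.sqrt (1/2) ≤ 71/100 := by
    nlinarith [Real.sq_sqrt (show (0:ℝ) ≤ 1/2 by norm_num), Real.sqrt_nonneg (1/2 : ℝ)]
  rw [hs]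
  linarith [h1]

private lemma ads_val2 :
    ∫ y in Set.Ioi (3/2 : ℝ), 2 * y ^ (-4 : ℝ) ≤ 16/81 := by
  rw [MeasureTheory.integral_const_mul,
    integral_Ioi_rpow_of_lt (by norm_num) (by norm_num : (0:ℝ) < 3/2)]
  have h : ((3:ℝ)/2) ^ ((-4 : ℝ) + 1) = 8/27 := by
    rw [show ((-4:ℝ) + 1) = ((-3 : ℤ) : ℝ) by norm_num, Real.rpow_intCast]
    norm_num
  rw [h]
  norm_num

/-- The renormalized AdS₅×S⁵ energy integral `∫_1^∞ (y²/√(y⁴−1) − 1) dy`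
converges, and subtracting 1 (the mass renormalization) gives a negative
(attractive) result. -/
theorem ads_energy_integral_converges_and_negative :
    IntegrableOn (fun y => y ^ 2 / Real.sqrt (y ^ 4 - 1) - 1) (Set.Ioi (1:ℝ)) ∧
    (∫ y in Set.Ioi (1:ℝ), (y ^ 2 / Real.sqrt (y ^ 4 - 1) - 1)) - 1 < 0 := by
  have hunion : Set.Ioc (1:ℝ) (3/2) ∪ Set.Ioi (3/2 : ℝ) = Set.Ioi (1:ℝ) :=
    Set.Ioc_union_Ioi_eq_Ioi (by norm_num)
  have hint : IntegrableOn (fun y => y ^ 2 / Real.sqrt (y ^ 4 - 1) - 1) (Set.Ioi (1:ℝ)) := by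
    rw [← hunion]; exact ads_f_int1.union ads_f_int2
  refine ⟨hint, ?_⟩
  have hsplit : (∫ y in Set.Ioi (1:ℝ), (y ^ 2 / Real.sqrt (y ^ 4 - 1) - 1))
      = (∫ y in Set.Ioc (1:ℝ) (3/2), (y ^ 2 / Real.sqrt (y ^ 4 - 1) - 1))
        + (∫ y in Set.Ioi (3/2 : ℝ), (y ^ 2 / Real.sqrt (y ^ 4 - 1) - 1)) := by
    rw [← hunion]
    exact setIntegral_union (Set.Ioc_disjoint_Ioi le_rfl) measurableSet_Ioi ads_f_int1 ads_f_int2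
  have h1 : (∫ y in Set.Ioc (1:ℝ) (3/2), (y ^ 2 / Real.sqrt (y ^ 4 - 1) - 1))
      ≤ ∫ y in Set.Ioc (1:ℝ) (3/2), (1/2) * (y - 1) ^ (-(1/2) : ℝ) :=
    setIntegral_mono_on ads_f_int1 ads_int1 measurableSet_Ioc (fun y hy => ads_bound1 hy.1)
  have h2 : (∫ y in Set.Ioi (3/2 : ℝ), (y ^ 2 / Real.sqrt (y ^ 4 - 1) - 1))
      ≤ ∫ y in Set.Ioi (3/2 : ℝ), 2 * y ^ (-4 : ℝ) :=
    setIntegral_mono_on ads_f_int2 ads_int2 measurableSet_Ioi (fun y hy => ads_bound2 (le_of_lt hy))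
  rw [hsplit]
  linarith [ads_val1, ads_val2]
end

section
/- Let f(u) = u²/R² and g(u) = (1 − (u_T/u)⁴)^{−1/2} on (u_T, ∞) with R, u_T > 0. Then: (a) g diverges as u → u_T⁺ while f(u_T) = u_T²/R² > 0; (b) for every continuously differentiable curve u(x) with u(x) ≥ u_T connecting the endpoints, the energy ∫ √(f(u)² + g(u)² u'(x)²) dx ≥ f(u_T)·L = (u_T²/R²)·L. Hence this background (the dual of pure 3d Yang–Mills) exhibits linear confinement with string tension at least u_T²/(2πα' R²) (tension f(u_T) up to the overall Nambu–Goto normalization). -/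
open Real intervalIntegral Filter

/-- In the background dual to pure 3d YM, `f(u) = u²/R²`,
`g(u) = (1−(u_T/u)⁴)^{−1/2}`: (a) `g` diverges as `u → u_T⁺` while
`f(u_T) > 0`; (b) every admissible curve has energy at least `(u_T²/R²)·L`,
so the background confines linearly with tension at least
`u_T²/(2πα'R²)`. -/
theorem confining_3dYM_background
    (R uT : ℝ) (hR : 0 < R) (huT : 0 < uT) :
    (Tendsto (fun u : ℝ => (Real.sqrt (1 - (uT / u) ^ 4))⁻¹)
        (nhdsWithin uT (Set.Ioi uT)) atTop ∧
      0 < uT ^ 2 / R ^ 2) ∧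
    (∀ L : ℝ, 0 < L →
      ∀ u : ℝ → ℝ, ContDiffOn ℝ 1 u (Set.Icc (-L/2) (L/2)) →
        (∀ x ∈ Set.Icc (-L/2) (L/2), uT ≤ u x) →
        IntervalIntegrable
          (fun x => Real.sqrt (((u x) ^ 2 / R ^ 2) ^ 2 +
            ((Real.sqrt (1 - (uT / u x) ^ 4))⁻¹) ^ 2 * (deriv u x) ^ 2))
          MeasureTheory.volume (-L/2) (L/2) →
        ((uT ^ 2 / R ^ 2) * L ≤
          ∫ x in (-L/2)..(L/2),
            Real.sqrt (((u x) ^ 2 / R ^ 2) ^ 2 +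
              ((Real.sqrt (1 - (uT / u x) ^ 4))⁻¹) ^ 2 * (deriv u x) ^ 2) ∧
         ∀ α' : ℝ, 0 < α' →
           (uT ^ 2 / (2 * π * α' * R ^ 2)) * L ≤
             (1 / (2 * π * α')) *
               ∫ x in (-L/2)..(L/2),
                 Real.sqrt (((u x) ^ 2 / R ^ 2) ^ 2 +
                   ((Real.sqrt (1 - (uT / u x) ^ 4))⁻¹) ^ 2 * (deriv u x) ^ 2))) := by
  constructor
  · constructor
    · -- g diverges
      apply Filter.Tendsto.inv_tendsto_nhdsGT_zero
      rw [tendsto_nhdsWithin_iff]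
      constructor
      · have h0 : Real.sqrt (1 - (uT / uT) ^ 4) = 0 := by
          rw [div_self huT.ne']; norm_num
        have hc : ContinuousAt (fun v : ℝ => Real.sqrt (1 - (uT / v) ^ 4)) uT := by
          apply Real.continuous_sqrt.continuousAt.comp
          exact (continuousAt_const.sub (((continuousAt_const.div
            continuousAt_id huT.ne').pow 4)))
        have := hc.continuousWithinAt (s := Set.Ioi uT)
        rw [ContinuousWithinAt, h0] at this
        exact this
      · filter_upwards [self_mem_nhdsWithin] with v hv
        have hv' : uT < v := hv
        have h1 : (uT / v) ^ 4 < 1 := by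
          have : uT / v < 1 := (div_lt_one (huT.trans hv')).mpr hv'
          have h0 : 0 ≤ uT / v := le_of_lt (div_pos huT (huT.trans hv'))
          calc (uT / v) ^ 4 ≤ uT / v := pow_le_of_le_one h0 this.le (by norm_num)
            _ < 1 := this
        exact Set.mem_Ioi.mpr (Real.sqrt_pos.mpr (by linarith))
    · positivity
  · intro L hL u hu hge hint
    have hab : (-L/2 : ℝ) ≤ L/2 := by linarith
    set F : ℝ → ℝ := fun x => Real.sqrt (((u x) ^ 2 / R ^ 2) ^ 2 +
      ((Real.sqrt (1 - (uT / u x) ^ 4))⁻¹) ^ 2 * (deriv u x) ^ 2) with hF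
    have hpt : ∀ x ∈ Set.Icc (-L/2) (L/2), uT ^ 2 / R ^ 2 ≤ F x := by
      intro x hx
      have h1 : uT ≤ u x := hge x hx
      have hA : uT ^ 2 / R ^ 2 ≤ (u x) ^ 2 / R ^ 2 := by
        apply div_le_div_of_nonneg_right _ (by positivity)
        exact pow_le_pow_left₀ huT.le h1 2
      have hB : (u x) ^ 2 / R ^ 2 ≤ F x := by
        rw [hF]
        have : ((u x) ^ 2 / R ^ 2) = Real.sqrt (((u x) ^ 2 / R ^ 2) ^ 2) := by
          rw [Real.sqrt_sq (by positivity)]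
        rw [this]
        exact Real.sqrt_le_sqrt (by nlinarith [sq_nonneg ((Real.sqrt (1 - (uT / u x) ^ 4))⁻¹ * deriv u x), sq_nonneg (deriv u x), sq_nonneg ((Real.sqrt (1 - (uT / u x) ^ 4))⁻¹), mul_nonneg (sq_nonneg ((Real.sqrt (1 - (uT / u x) ^ 4))⁻¹)) (sq_nonneg (deriv u x))])
      linarith
    have hconst : IntervalIntegrable (fun _ : ℝ => uT ^ 2 / R ^ 2)
        MeasureTheory.volume (-L/2) (L/2) := intervalIntegrable_const
    have hmono := intervalIntegral.integral_mono_on hab hconst hint hpt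
    rw [intervalIntegral.integral_const, smul_eq_mul] at hmono
    have hLval : (L/2 - (-L/2)) = L := by ring
    rw [hLval] at hmono
    have hmain : (uT ^ 2 / R ^ 2) * L ≤ ∫ x in (-L/2)..(L/2), F x := by
      linarith [hmono]
    refine ⟨hmain, fun α' hα' => ?_⟩
    have hπ : (0:ℝ) < π := Real.pi_pos
    have h2 : (0:ℝ) < 2 * π * α' := by positivity
    have : uT ^ 2 / (2 * π * α' * R ^ 2) * L = (1 / (2 * π * α')) * ((uT ^ 2 / R ^ 2) * L) := by
      field_simp
    rw [this]
    exact mul_le_mul_of_nonneg_left hmain (by positivity)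
end

section
/- Let f be continuous on [0,∞), analytic on (0,∞), with f(0) > 0, f(s) = f(0) + a_k s^k + O(s^{k+1}) near 0 with a_k > 0 and k > 0, and f'(s) > 0 for s > 0; let g(s) = b_j s^j + O(s^{j+1}) near 0 with b_j > 0, j > −1, g continuous and positive on (0,∞), and ∫^∞ g/f² ds < ∞. Then L(s₀) = 2∫_{s₀}^∞ (g/f)·f(s₀)/√(f² − f(s₀)²) ds tends to +∞ as s₀ → 0⁺. (Near s₀ → 0 the integrand behaves like b_j s^j f(0)/√(2 f(0) a_k (s^k − s₀^k)), whose integral over (s₀, δ) diverges like s₀^{j+1−k/2} if k > 2(j+1) or like log(1/s₀) if k = 2(j+1).) -/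
/-!
Near `0` we have `f s ^ 2 - f s₀ ^ 2 ≤ f s ^ 2 - f 0 ^ 2 = O(s ^ k)` and `g s ≳ s ^ j`, so on
`(s₀, δ)` the integrand is at least `c * s ^ (j - k / 2) ≥ c / s` once `k ≥ 2 (j + 1)`; hence
`L(s₀) ≥ 2 c log (δ / s₀) → ∞`. This needs the integrand to be integrable on `(s₀, ∞)` (a
non-integrable Bochner integral is `0`): near `s₀` the square root vanishes only like `√(s - s₀)`,
because `f'` is continuous and positive, and at infinity the integrand is dominated by `g / f²`.
-/

open Real Set Filter Topology MeasureTheory Asymptotics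

theorem isLittleO_rpow_add_one_rpow (k : ℝ) :
    (fun s : ℝ => s ^ (k + 1)) =o[𝓝[>] 0] fun s => s ^ k := by
  have h : (fun s : ℝ => s * s ^ k) =o[𝓝[>] 0] fun s => 1 * s ^ k :=
    ((isLittleO_id_const one_ne_zero).mono nhdsWithin_le_nhds).mul_isBigO (isBigO_refl _ _)
  refine (h.congr' ?_ (by simp)).congr_left fun _ => rfl
  filter_upwards [self_mem_nhdsWithin] with s hs
  rw [rpow_add_one (ne_of_gt hs), mul_comm]

theorem eventually_abs_le_mul_rpow_of_isBigO {u : ℝ → ℝ} {k ε : ℝ}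
    (hu : u =O[𝓝[>] 0] fun s => s ^ (k + 1)) (hε : 0 < ε) :
    ∀ᶠ s in 𝓝[>] 0, |u s| ≤ ε * s ^ k := by
  filter_upwards [(hu.trans_isLittleO (isLittleO_rpow_add_one_rpow k)).bound hε,
    self_mem_nhdsWithin] with s hs hs0
  rwa [norm_eq_abs, norm_eq_abs, abs_of_pos (rpow_pos_of_pos hs0 k)] at hs

theorem integrableOn_Ioc_of_norm_le_mul_rpow_sub {F : ℝ → ℝ} {a b C r : ℝ} (hr : -1 < r)
    (hF : AEStronglyMeasurable F (volume.restrict (Ioc a b)))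
    (hle : ∀ s ∈ Ioc a b, ‖F s‖ ≤ C * (s - a) ^ r) :
    IntegrableOn F (Ioc a b) := by
  have hrpow : IntervalIntegrable (fun s => (s - a) ^ r) volume a b := by
    simpa using
      (intervalIntegral.intervalIntegrable_rpow' (a := 0) (b := b - a) hr).comp_sub_right a
  refine Integrable.mono' (hrpow.1.const_mul C) hF ?_
  exact (ae_restrict_iff' measurableSet_Ioc).mpr (ae_of_all _ hle)

theorem mul_log_sub_log_le_setIntegral_Ioi {F : ℝ → ℝ} {a b c : ℝ} (ha : 0 < a) (hab : a < b)
    (hF : IntegrableOn F (Ioi a)) (hF_nonneg : ∀ s ∈ Ioi a, 0 ≤ F s)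
    (hle : ∀ s ∈ Ioo a b, c * s⁻¹ ≤ F s) :
    c * (log b - log a) ≤ ∫ s in Ioi a, F s := by
  have hinv : IntegrableOn (fun s => c * s⁻¹) (Ioo a b) :=
    ((continuousOn_const.mul (continuousOn_inv₀.mono fun s hs => (ha.trans_le hs.1).ne')
      ).integrableOn_Icc).mono_set Ioo_subset_Icc_self
  calc c * (log b - log a) = ∫ s in Ioo a b, c * s⁻¹ := by
        rw [← integral_Ioc_eq_integral_Ioo, ← intervalIntegral.integral_of_le hab.le,
          intervalIntegral.integral_const_mul, integral_inv_of_pos ha (ha.trans hab),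
          log_div (ha.trans hab).ne' ha.ne']
    _ ≤ ∫ s in Ioo a b, F s :=
        setIntegral_mono_on hinv (hF.mono_set Ioo_subset_Ioi_self) measurableSet_Ioo hle
    _ ≤ ∫ s in Ioi a, F s :=
        setIntegral_mono_set hF
          ((ae_restrict_iff' measurableSet_Ioi).mpr (ae_of_all _ hF_nonneg))
          Ioo_subset_Ioi_self.eventuallyLE

theorem exists_pos_mul_sub_le_sub {f : ℝ → ℝ} {a b : ℝ}
    (hf : ∀ x ∈ Icc a b, DifferentiableAt ℝ f x) (hf' : ContinuousOn (deriv f) (Icc a b))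
    (hpos : ∀ x ∈ Icc a b, 0 < deriv f x) :
    ∃ m > 0, ∀ s ∈ Icc a b, m * (s - a) ≤ f s - f a := by
  rcases (Icc a b).eq_empty_or_nonempty with hempty | hne
  · exact ⟨1, one_pos, by simp [hempty]⟩
  obtain ⟨x, hx, hmin⟩ := isCompact_Icc.exists_isMinOn hne hf'
  refine ⟨deriv f x, hpos x hx, fun s hs => ?_⟩
  refine (convex_Icc a b).mul_sub_le_image_sub_of_le_deriv
    (fun y hy => (hf y hy).continuousAt.continuousWithinAt)
    (fun y hy => (hf y (interior_subset hy)).differentiableWithinAt)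
    (fun y hy => hmin (interior_subset hy)) a (left_mem_Icc.mpr (hs.1.trans hs.2)) s hs
    hs.1

noncomputable def separationIntegrand (f g : ℝ → ℝ) (s₀ s : ℝ) : ℝ :=
  g s / f s * (f s₀ / √(f s ^ 2 - f s₀ ^ 2))

section
variable {f g : ℝ → ℝ} {s₀ : ℝ}

theorem separationIntegrand_nonneg {s : ℝ} (hg : 0 ≤ g s) (hf : 0 ≤ f s) (hf₀ : 0 ≤ f s₀) :
    0 ≤ separationIntegrand f g s₀ s :=
  mul_nonneg (div_nonneg hg hf) (div_nonneg hf₀ (sqrt_nonneg _))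

theorem continuousOn_separationIntegrand {S : Set ℝ} (hf : ContinuousOn f S)
    (hg : ContinuousOn g S) (hf₀ : 0 ≤ f s₀) (hlt : ∀ s ∈ S, f s₀ < f s) :
    ContinuousOn (separationIntegrand f g s₀) S := by
  refine (hg.div hf fun s hs => (hf₀.trans_lt (hlt s hs)).ne').mul
    (continuousOn_const.div (((hf.pow 2).sub continuousOn_const).sqrt) fun s hs => ?_)
  have := hlt s hs
  exact (sqrt_pos.mpr (by nlinarith)).ne'

theorem integrableOn_Ioc_separationIntegrand {b m G : ℝ} (hm : 0 < m) (hf₀ : 0 < f s₀)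
    (hF : ContinuousOn (separationIntegrand f g s₀) (Ioc s₀ b))
    (hg : ∀ s ∈ Ioc s₀ b, 0 ≤ g s ∧ g s ≤ G)
    (hgrow : ∀ s ∈ Ioc s₀ b, m * (s - s₀) ≤ f s - f s₀) :
    IntegrableOn (separationIntegrand f g s₀) (Ioc s₀ b) := by
  refine integrableOn_Ioc_of_norm_le_mul_rpow_sub (C := G / √(2 * f s₀ * m)) (r := -(1 / 2))
    (by norm_num) (hF.aestronglyMeasurable measurableSet_Ioc) fun s hs => ?_
  obtain ⟨hg0, hgG⟩ := hg s hs
  have hss₀ : 0 < s - s₀ := sub_pos.mpr hs.1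
  have hfs : f s₀ ≤ f s := by nlinarith [hgrow s hs]
  -- `f s ^ 2 - f s₀ ^ 2 = (f s - f s₀) (f s + f s₀) ≥ m (s - s₀) * 2 f s₀`
  have hsq : √(2 * f s₀ * m) * √(s - s₀) ≤ √(f s ^ 2 - f s₀ ^ 2) := by
    rw [← sqrt_mul (by positivity)]
    exact sqrt_le_sqrt (by nlinarith [hgrow s hs])
  rw [norm_of_nonneg (separationIntegrand_nonneg hg0 (hf₀.le.trans hfs) hf₀.le),
    rpow_neg hss₀.le, ← sqrt_eq_rpow]
  calc separationIntegrand f g s₀ s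
      ≤ G / f s₀ * (f s₀ / (√(2 * f s₀ * m) * √(s - s₀))) := by
        unfold separationIntegrand
        have hsq_pos : 0 < √(2 * f s₀ * m) * √(s - s₀) := by positivity
        exact mul_le_mul (div_le_div₀ (hg0.trans hgG) hgG hf₀ hfs)
          (div_le_div_of_nonneg_left hf₀.le hsq_pos hsq) (by positivity)
          (div_nonneg (hg0.trans hgG) hf₀.le)
    _ = G / √(2 * f s₀ * m) * (√(s - s₀))⁻¹ := by
        field_simp

theorem integrableOn_Ioi_separationIntegrand {b : ℝ}
    (htail : IntegrableOn (fun s => g s / f s ^ 2) (Ioi b))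
    (hF : ContinuousOn (separationIntegrand f g s₀) (Ioi b)) (hg : ∀ s ∈ Ioi b, 0 ≤ g s)
    (hf₀ : 0 ≤ f s₀) (hlt : f s₀ < f b) (hmono : ∀ s ∈ Ioi b, f b ≤ f s) :
    IntegrableOn (separationIntegrand f g s₀) (Ioi b) := by
  set ρ := f s₀ / f b
  have hb : 0 < f b := hf₀.trans_lt hlt
  have hρ : 0 ≤ ρ := div_nonneg hf₀ hb.le
  have hρ1 : ρ < 1 := (div_lt_one hb).mpr hlt
  refine Integrable.mono' (htail.const_mul (f s₀ / √(1 - ρ ^ 2)))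
    (hF.aestronglyMeasurable measurableSet_Ioi)
    ((ae_restrict_iff' measurableSet_Ioi).mpr (ae_of_all _ fun s hs => ?_))
  have hfs : 0 < f s := hb.trans_le (hmono s hs)
  have hρs : f s₀ ≤ ρ * f s := by
    calc f s₀ = ρ * f b := by rw [div_mul_cancel₀ _ hb.ne']
      _ ≤ ρ * f s := mul_le_mul_of_nonneg_left (hmono s hs) hρ
  have hsq : √(1 - ρ ^ 2) * f s ≤ √(f s ^ 2 - f s₀ ^ 2) := by
    rw [← sqrt_sq hfs.le, ← sqrt_mul (by nlinarith), sqrt_sq hfs.le]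
    exact sqrt_le_sqrt (by nlinarith)
  rw [norm_of_nonneg (separationIntegrand_nonneg (hg s hs) hfs.le hf₀)]
  calc separationIntegrand f g s₀ s ≤ g s / f s * (f s₀ / (√(1 - ρ ^ 2) * f s)) := by
        unfold separationIntegrand
        have : 0 < √(1 - ρ ^ 2) := sqrt_pos.mpr (by nlinarith)
        gcongr
        exact div_nonneg (hg s hs) hfs.le
    _ = f s₀ / √(1 - ρ ^ 2) * (g s / f s ^ 2) := by
        field_simp

theorem mul_rpow_le_separationIntegrand {m A B j k s : ℝ} (hs : 0 < s) (hm : 0 < m)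
    (hA : 0 < A) (hB : 0 ≤ B) (hm₀ : m ≤ f s₀) (hlt : f s₀ < f s) (hfs : f s ≤ 2 * m)
    (hfA : f s - m ≤ A * s ^ k) (hgB : B * s ^ j ≤ g s) :
    B / (2 * √(3 * A * m)) * s ^ (j - k / 2) ≤ separationIntegrand f g s₀ s := by
  have hfs_pos : 0 < f s := hm.trans_le (hm₀.trans hlt.le)
  have hg : 0 ≤ g s := (by positivity : 0 ≤ B * s ^ j).trans hgB
  have hsk : √(3 * A * m * s ^ k) = √(3 * A * m) * s ^ (k / 2) := by
    rw [sqrt_mul (by positivity), sqrt_eq_rpow, sqrt_eq_rpow, ← rpow_mul hs.le, mul_one_div]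
  have hsq : √(f s ^ 2 - f s₀ ^ 2) ≤ √(3 * A * m) * s ^ (k / 2) := by
    rw [← hsk]
    exact sqrt_le_sqrt (by nlinarith)
  have hsq_pos : 0 < √(f s ^ 2 - f s₀ ^ 2) := sqrt_pos.mpr (by nlinarith)
  calc B / (2 * √(3 * A * m)) * s ^ (j - k / 2)
      = B * s ^ j / (2 * m) * (m / (√(3 * A * m) * s ^ (k / 2))) := by
        rw [rpow_sub hs]
        field_simp
    _ ≤ g s / f s * (f s₀ / √(f s ^ 2 - f s₀ ^ 2)) :=
        mul_le_mul (div_le_div₀ hg hgB hfs_pos hfs)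
          (div_le_div₀ (hm.le.trans hm₀) hm₀ hsq_pos hsq) (by positivity)
          (div_nonneg hg hfs_pos.le)

theorem integrableOn_separationIntegrand (hf : ContDiffOn ℝ 1 f (Ioi 0))
    (hf' : ∀ s > 0, 0 < deriv f s) (hg : ContinuousOn g (Ioi 0)) (hg_nonneg : ∀ s > 0, 0 ≤ g s)
    (htail : IntegrableOn (fun s => g s / f s ^ 2) (Ioi 1)) (hs₀ : 0 < s₀) (hf₀ : 0 < f s₀) :
    IntegrableOn (separationIntegrand f g s₀) (Ioi s₀) := by
  have hd : DifferentiableOn ℝ f (Ioi 0) := hf.differentiableOn one_ne_zero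
  have hmono : StrictMonoOn f (Ioi 0) :=
    strictMonoOn_of_deriv_pos (convex_Ioi 0) hd.continuousOn (by rwa [interior_Ioi])
  have hpos : Ioi s₀ ⊆ Ioi 0 := Ioi_subset_Ioi hs₀.le
  have hlt : ∀ s ∈ Ioi s₀, f s₀ < f s := fun s hs => hmono hs₀ (hpos hs) hs
  have hF :=
    continuousOn_separationIntegrand (hd.continuousOn.mono hpos) (hg.mono hpos) hf₀.le hlt
  have hIcc : Icc s₀ (s₀ + 1) ⊆ Ioi 0 := fun s hs => hs₀.trans_le hs.1
  obtain ⟨m, hm, hgrow⟩ := exists_pos_mul_sub_le_sub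
    (fun x hx => hd.differentiableAt (isOpen_Ioi.mem_nhds (hIcc hx)))
    ((hf.continuousOn_deriv_of_isOpen isOpen_Ioi le_rfl).mono hIcc) fun x hx => hf' x (hIcc hx)
  obtain ⟨G, hG⟩ := isCompact_Icc.bddAbove_image (hg.mono hIcc)
  have hnear := integrableOn_Ioc_separationIntegrand hm hf₀ (hF.mono Ioc_subset_Ioi_self)
    (fun s hs => ⟨hg_nonneg s (hpos hs.1), hG (mem_image_of_mem g (Ioc_subset_Icc_self hs))⟩)
    fun s hs => hgrow s (Ioc_subset_Icc_self hs)
  have hb : s₀ + 1 ∈ Ioi s₀ := lt_add_one s₀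
  have hb_sub : Ioi (s₀ + 1) ⊆ Ioi s₀ := Ioi_subset_Ioi hb.out.le
  have hfar := integrableOn_Ioi_separationIntegrand
    (htail.mono_set (Ioi_subset_Ioi (by linarith))) (hF.mono hb_sub)
    (fun s hs => hg_nonneg s (hpos (hb_sub hs))) hf₀.le (hlt _ hb)
    fun s hs => hmono.monotoneOn (hpos hb) (hpos (hb_sub hs)) hs.out.le
  rw [← Ioc_union_Ioi_eq_Ioi (by linarith : s₀ ≤ s₀ + 1)]
  exact hnear.union hfar

theorem exists_inv_le_separationIntegrand {ak bj k j : ℝ} (hf_mono : StrictMonoOn f (Ici 0))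
    (hf0 : 0 < f 0) (hf_cont : ContinuousWithinAt f (Ioi 0) 0) (hak : 0 < ak)
    (hf_exp : (fun s => f s - f 0 - ak * s ^ k) =O[𝓝[>] 0] fun s => s ^ (k + 1))
    (hbj : 0 < bj) (hg_exp : (fun s => g s - bj * s ^ j) =O[𝓝[>] 0] fun s => s ^ (j + 1))
    (hkj : 2 * (j + 1) ≤ k) :
    ∃ c > 0, ∃ δ > 0, ∀ s₀ s, 0 < s₀ → s₀ < s → s < δ →
      c * s⁻¹ ≤ separationIntegrand f g s₀ s := by
  have hnear : ∀ᶠ s in 𝓝[>] 0,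
      f s - f 0 ≤ 2 * ak * s ^ k ∧ bj / 2 * s ^ j ≤ g s ∧ f s < 2 * f 0 ∧ s < 1 := by
    filter_upwards [eventually_abs_le_mul_rpow_of_isBigO hf_exp hak,
      eventually_abs_le_mul_rpow_of_isBigO hg_exp (half_pos hbj),
      hf_cont.eventually_lt_const (by linarith : f 0 < 2 * f 0), Ioo_mem_nhdsGT one_pos]
      with s hfs hgs hf2 hs1
    refine ⟨by linarith [(abs_le.mp hfs).2], by linarith [(abs_le.mp hgs).1], hf2, hs1.2⟩
  obtain ⟨δ, hδ, hsub⟩ := mem_nhdsGT_iff_exists_Ioo_subset.mp hnear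
  set c := bj / 2 / (2 * √(3 * (2 * ak) * f 0))
  refine ⟨c, by positivity, δ, hδ, fun s₀ s hs₀ hs₀s hsδ => ?_⟩
  have hs : 0 < s := hs₀.trans hs₀s
  obtain ⟨hfA, hgB, hf2, hs1⟩ := hsub ⟨hs, hsδ⟩
  calc c * s⁻¹ = c * s ^ (-1 : ℝ) := by rw [rpow_neg_one]
    _ ≤ c * s ^ (j - k / 2) :=
        mul_le_mul_of_nonneg_left (rpow_le_rpow_of_exponent_ge hs hs1.le (by linarith))
          (by positivity)
    _ ≤ separationIntegrand f g s₀ s :=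
        mul_rpow_le_separationIntegrand hs hf0 (by positivity) (by positivity)
          (hf_mono.monotoneOn self_mem_Ici hs₀.le hs₀.le) (hf_mono hs₀.le hs.le hs₀s) hf2.le hfA
          hgB

end

theorem separation_diverges_confining_case_general
    (f g : ℝ → ℝ) (ak bj k j : ℝ)
    (hf_cont : ContinuousOn f (Set.Ici 0))
    (hf_anal : AnalyticOn ℝ f (Set.Ioi 0))
    (hf0 : 0 < f 0) (hak : 0 < ak)
    (hf_exp : (fun s => f s - f 0 - ak * s ^ k)
      =O[nhdsWithin 0 (Set.Ioi 0)] (fun s => s ^ (k + 1)))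
    (hf_deriv : ∀ s > (0:ℝ), 0 < deriv f s)
    (hg_cont : ContinuousOn g (Set.Ioi 0))
    (hg_pos : ∀ s > (0:ℝ), 0 < g s)
    (hbj : 0 < bj)
    (hg_exp : (fun s => g s - bj * s ^ j)
      =O[nhdsWithin 0 (Set.Ioi 0)] (fun s => s ^ (j + 1)))
    (htail : IntegrableOn (fun s => g s / (f s) ^ 2) (Set.Ioi 1))
    (hkj : 2 * (j + 1) ≤ k) :
    Tendsto
      (fun s₀ => 2 * ∫ s in Set.Ioi s₀,
        (g s / f s) * (f s₀ / Real.sqrt ((f s) ^ 2 - (f s₀) ^ 2)))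
      (nhdsWithin 0 (Set.Ioi 0)) atTop := by
  have hf_mono : StrictMonoOn f (Ici 0) :=
    strictMonoOn_of_deriv_pos (convex_Ici 0) hf_cont (by rwa [interior_Ici])
  have hf_pos : ∀ s ∈ Ici (0 : ℝ), 0 < f s :=
    fun s hs => hf0.trans_le (hf_mono.monotoneOn self_mem_Ici hs hs)
  obtain ⟨c, hc, δ, hδ, hlow⟩ := exists_inv_le_separationIntegrand hf_mono hf0
    ((hf_cont 0 self_mem_Ici).mono Ioi_subset_Ici_self) hak hf_exp hbj hg_exp hkj
  have hL : ∀ s₀ ∈ Ioo 0 δ,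
      c * (log δ - log s₀) ≤ ∫ s in Ioi s₀, separationIntegrand f g s₀ s :=
    fun s₀ hs₀ => mul_log_sub_log_le_setIntegral_Ioi hs₀.1 hs₀.2
      (integrableOn_separationIntegrand (hf_anal.contDiffOn (uniqueDiffOn_Ioi 0)) hf_deriv
        hg_cont (fun s hs => (hg_pos s hs).le) htail hs₀.1 (hf_pos s₀ hs₀.1.le))
      (fun s hs => separationIntegrand_nonneg (hg_pos s (hs₀.1.trans hs)).le
        (hf_pos s (hs₀.1.trans hs).le).le (hf_pos s₀ hs₀.1.le).le)
      fun s hs => hlow s₀ s hs₀.1 hs.1 hs.2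
  have hlog : Tendsto (fun s₀ => c * (log δ - log s₀)) (𝓝[>] 0) atTop :=
    (tendsto_atTop_add_const_left _ _
      (tendsto_neg_atBot_atTop.comp tendsto_log_nhdsGT_zero)).const_mul_atTop hc
  refine (tendsto_atTop_mono' _ ?_ hlog).const_mul_atTop two_pos
  filter_upwards [Ioo_mem_nhdsGT hδ] with s₀ hs₀ using hL s₀ hs₀

/-- In the confining case `f(0) > 0`, with `f(s) = f(0) + a_k s^k + O(s^{k+1})`
and `g(s) = b_j s^j + O(s^{j+1})` near `0`, `k ≥ 2(j+1)`, the separation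
`L(s₀) = 2∫_{s₀}^∞ (g/f)·f(s₀)/√(f²−f(s₀)²) ds` tends to `+∞` as `s₀ → 0⁺`. -/
theorem separation_diverges_confining_case
    (f g : ℝ → ℝ) (ak bj k j : ℝ)
    (hf_cont : ContinuousOn f (Set.Ici 0))
    (hf_anal : AnalyticOn ℝ f (Set.Ioi 0))
    (hf0 : 0 < f 0) (hak : 0 < ak) (hk : 0 < k)
    (hf_exp : (fun s => f s - f 0 - ak * s ^ k)
      =O[nhdsWithin 0 (Set.Ioi 0)] (fun s => s ^ (k + 1)))
    (hf_deriv : ∀ s > (0:ℝ), 0 < deriv f s)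
    (hg_cont : ContinuousOn g (Set.Ioi 0))
    (hg_pos : ∀ s > (0:ℝ), 0 < g s)
    (hbj : 0 < bj) (hj : -1 < j)
    (hg_exp : (fun s => g s - bj * s ^ j)
      =O[nhdsWithin 0 (Set.Ioi 0)] (fun s => s ^ (j + 1)))
    (htail : IntegrableOn (fun s => g s / (f s) ^ 2) (Set.Ioi 1))
    (hkj : 2 * (j + 1) ≤ k) :
    Tendsto
      (fun s₀ => 2 * ∫ s in Set.Ioi s₀,
        (g s / f s) * (f s₀ / Real.sqrt ((f s) ^ 2 - (f s₀) ^ 2)))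
      (nhdsWithin 0 (Set.Ioi 0)) atTop :=
  separation_diverges_confining_case_general f g ak bj k j hf_cont hf_anal hf0 hak hf_exp hf_deriv
    hg_cont hg_pos hbj hg_exp htail hkj
end
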